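/- arXiv:2501.08949 — 6 statements merged into one kernel-verified Lean document; each statement's English description precedes it below -/
import Mathlib

section
/- Suppose F : ℝ × ℝ → ℝ is k-times continuously differentiable (k ≥ 1) and F(x,y) = g(x+y) - g(x) - g(y) for some function g : ℝ → ℝ. Then there exists a k-times continuously differentiable function f : ℝ → ℝ such that F(x,y) = f(x+y) - f(x) - f(y) for all real x, y. -/
/-!
A coboundary `g (x + y) - g x - g y` satisfies the cocycle identity
`F (x, y) + F (x + y, z) = F (y, z) + F (x, y + z)`, and only this identity is used: `g` itself,
which may be a wild additive function plus a smooth one, is never touched again.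
Differentiating the identity in its last variable shows that `∂₂F (x, y) = φ (x + y) - φ y` with
`φ = ∂₂F (·, 0)`, a `C^(k-1)` function. Hence if `f` is a primitive of `φ` with `f 0 = -F (0, 0)`,
then `y ↦ F (x, y) - (f (x + y) - f x - f y)` has zero derivative and vanishes at `y = 0`.
-/

def IsAddTwoCocycle {G E : Type*} [Add G] [Add E] (F : G × G → E) : Prop :=
  ∀ x y z, F (x, y) + F (x + y, z) = F (y, z) + F (x, y + z)

theorem isAddTwoCocycle_coboundary {G E : Type*} [AddSemigroup G] [AddCommGroup E] (g : G → E) :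
    IsAddTwoCocycle fun p : G × G => g (p.1 + p.2) - g p.1 - g p.2 := by
  intro x y z
  simp only [add_assoc]
  abel

namespace IsAddTwoCocycle

section AddCommGroup

variable {G E : Type*} [AddCommGroup G] [AddCommGroup E] {F : G × G → E}

theorem apply_zero_right (hF : IsAddTwoCocycle F) (x : G) : F (x, 0) = F (0, 0) := by
  simpa using hF x 0 0

theorem apply_eq_shift (hF : IsAddTwoCocycle F) (x y w : G) :
    F (x, w) = F (x + y, w - y) - F (y, w - y) + F (x, y) := by
  have h := hF x y (w - y)
  rw [add_sub_cancel] at h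
  calc F (x, w) = F (y, w - y) + F (x, w) - F (y, w - y) := by abel
    _ = _ := by rw [← h]; abel

end AddCommGroup

variable {E : Type*} [NormedAddCommGroup E] [NormedSpace ℝ E] {F : ℝ × ℝ → E} {φ f : ℝ → E}

theorem hasDerivAt_snd (hF : IsAddTwoCocycle F)
    (hφ : ∀ t, HasDerivAt (fun z => F (t, z)) (φ t) 0) (x y : ℝ) :
    HasDerivAt (fun w => F (x, w)) (φ (x + y) - φ y) y := by
  have hshift (t : ℝ) : HasDerivAt (fun w => F (t, w - y)) (φ t) y := by
    simpa using HasDerivAt.comp_sub_const y y (by simpa using hφ t)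
  exact (((hshift (x + y)).sub (hshift y)).add_const (F (x, y))).congr_of_eventuallyEq
    (.of_forall fun w => hF.apply_eq_shift x y w)

theorem eq_coboundary_of_hasDerivAt (hF : IsAddTwoCocycle F)
    (hφ : ∀ t, HasDerivAt (fun z => F (t, z)) (φ t) 0) (hf : ∀ t, HasDerivAt f (φ t) t)
    (hf0 : f 0 = -F (0, 0)) (x y : ℝ) : F (x, y) = f (x + y) - f x - f y := by
  set D : ℝ → E := fun w => F (x, w) - (f (x + w) - f x - f w)
  have hD (w : ℝ) : HasDerivAt D 0 w :=
    ((hF.hasDerivAt_snd hφ x w).sub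
      ((((hf (x + w)).comp_const_add x w).sub_const (f x)).sub (hf w))).congr_deriv (sub_self _)
  have hDy : D y = D 0 :=
    is_const_of_deriv_eq_zero (fun w => (hD w).differentiableAt) (fun w => (hD w).deriv) y 0
  simp only [D, add_zero, sub_self, zero_sub, hf0, neg_neg, hF.apply_zero_right] at hDy
  exact sub_eq_zero.mp hDy

end IsAddTwoCocycle

section Calculus

variable {E : Type*} [NormedAddCommGroup E] [NormedSpace ℝ E]

theorem contDiff_primitive [CompleteSpace E] {φ : ℝ → E} {n : ℕ∞} (hφ : ContDiff ℝ n φ) (a : ℝ) :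
    ContDiff ℝ (n + 1) fun u => ∫ t in a..u, φ t := by
  have hderiv (u : ℝ) : HasDerivAt (fun u => ∫ t in a..u, φ t) (φ u) u :=
    (hφ.continuous.integral_hasStrictDerivAt a u).hasDerivAt
  have : ContDiff ℝ ((n : WithTop ℕ∞) + 1) fun u => ∫ t in a..u, φ t := by
    rw [contDiff_succ_iff_deriv]
    refine ⟨fun u => (hderiv u).differentiableAt, fun h => absurd h WithTop.coe_ne_top, ?_⟩
    rwa [funext fun u => (hderiv u).deriv]
  exact_mod_cast this

theorem ContDiff.deriv_snd {F : ℝ × ℝ → E} {n : ℕ∞} (hF : ContDiff ℝ (n + 1) F) (z₀ : ℝ) :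
    ContDiff ℝ n fun t => deriv (fun z => F (t, z)) z₀ :=
  ContDiff.fderiv_apply (f := fun t z => F (t, z)) hF contDiff_const contDiff_const
    (by exact_mod_cast le_rfl)

end Calculus

theorem IsAddTwoCocycle.exists_contDiff_coboundary {E : Type*} [NormedAddCommGroup E]
    [NormedSpace ℝ E] [CompleteSpace E] {F : ℝ × ℝ → E} {n : ℕ∞} (hn : 1 ≤ n)
    (hFn : ContDiff ℝ n F) (hF : IsAddTwoCocycle F) :
    ∃ f : ℝ → E, ContDiff ℝ n f ∧ ∀ x y, F (x, y) = f (x + y) - f x - f y := by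
  obtain ⟨m, rfl⟩ : ∃ m, n = m + 1 := ⟨n - 1, (tsub_add_cancel_of_le hn).symm⟩
  set φ : ℝ → E := fun t => deriv (fun z => F (t, z)) 0
  set f : ℝ → E := fun u => (∫ t in (0 : ℝ)..u, φ t) - F (0, 0)
  have hφ : ContDiff ℝ m φ := by exact_mod_cast hFn.deriv_snd 0
  have hFdiff : Differentiable ℝ F := hFn.differentiable (by simp)
  have hF_snd (t : ℝ) : HasDerivAt (fun z => F (t, z)) (φ t) 0 :=
    (hFdiff.comp ((differentiable_const t).prodMk differentiable_id) 0).hasDerivAt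
  have hf (t : ℝ) : HasDerivAt f (φ t) t :=
    (hφ.continuous.integral_hasStrictDerivAt 0 t).hasDerivAt.sub_const _
  refine ⟨f, ?_, hF.eq_coboundary_of_hasDerivAt hF_snd hf (by simp [f])⟩
  exact_mod_cast (contDiff_primitive hφ 0).sub contDiff_const

theorem smooth_inhomCauchy_representation (k : ℕ) (hk : 1 ≤ k)
    (F : ℝ × ℝ → ℝ) (g : ℝ → ℝ)
    (hF : ContDiff ℝ k F)
    (hFg : ∀ x y : ℝ, F (x, y) = g (x + y) - g x - g y) :
    ∃ f : ℝ → ℝ, ContDiff ℝ k f ∧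
      ∀ x y : ℝ, F (x, y) = f (x + y) - f x - f y := by
  have hcocycle : IsAddTwoCocycle F := fun x y z => by
    simpa only [hFg] using isAddTwoCocycle_coboundary g x y z
  exact_mod_cast hcocycle.exists_contDiff_coboundary (n := k) (by exact_mod_cast hk)
    (by exact_mod_cast hF)
end

section
/- Let h : ℝ → ℝ with h(0) = 0, let H(x,y) = h(x+y) - h(x) - h(y), and suppose H extends to a continuous function on [0,1]² with H(x,0) = H(0,y) = 0. Then for any positive integers p, n with 0 < p/n < 1/2, |h(p/n)| ≤ 2p|h(1)|/n + 2·ω(H; p/n; [0,1]²), where ω denotes the modulus of continuity. -/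
/-- Modulus of continuity of a bivariate function on a subset of the plane. -/
noncomputable def modCont2 (f : ℝ × ℝ → ℝ) (δ : ℝ) (E : Set (ℝ × ℝ)) : ℝ :=
  sSup {d : ℝ | ∃ P ∈ E, ∃ Q ∈ E, dist P Q ≤ δ ∧ d = |f P - f Q|}

lemma combine_arith (mm a b c w : ℝ) (hm : 2 ≤ mm) (hw : 0 ≤ w)
    (hA : |a - mm * b| ≤ (mm - 1) * w) (hB : |a + c| ≤ w) (hC : |c| ≤ 2 * w) :
    |b| ≤ 2 * w := by
  have hmpos : (0:ℝ) < mm := by linarith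
  have hprod : 0 ≤ (mm - 2) * w := mul_nonneg (by linarith) hw
  have A := abs_le.1 hA
  have B := abs_le.1 hB
  have C := abs_le.1 hC
  rw [abs_le]
  constructor
  · have h1 : mm * (-(2 * w)) ≤ mm * b := by nlinarith
    exact le_of_mul_le_mul_left h1 hmpos
  · have h2 : mm * b ≤ mm * (2 * w) := by nlinarith
    exact le_of_mul_le_mul_left h2 hmpos

theorem rational_point_bound (h : ℝ → ℝ) (h0 : h 0 = 0)
    (H : ℝ × ℝ → ℝ)
    (hH : ∀ x y : ℝ, H (x, y) = h (x + y) - h x - h y)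
    (hHcont : ContinuousOn H (Set.Icc (0 : ℝ) 1 ×ˢ Set.Icc (0 : ℝ) 1))
    (p n : ℕ) (hp : 0 < p) (hpn : 2 * p < n) :
    |h ((p : ℝ) / n)| ≤ 2 * p * |h 1| / n +
      2 * modCont2 H ((p : ℝ) / n) (Set.Icc (0 : ℝ) 1 ×ˢ Set.Icc (0 : ℝ) 1) := by
  have hn : 0 < n := by omega
  have hnR : (0:ℝ) < n := by exact_mod_cast hn
  set E : Set (ℝ × ℝ) := Set.Icc (0 : ℝ) 1 ×ˢ Set.Icc (0 : ℝ) 1 with hEdef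
  set δ : ℝ := (p:ℝ)/n with hδdef
  have hδpos : 0 < δ := by positivity
  have hδle : δ ≤ 1 := by
    rw [hδdef, div_le_one hnR]
    exact_mod_cast Nat.le_of_lt (by omega)
  -- boundedness of H on E
  obtain ⟨M, hM⟩ := (isCompact_Icc.prod isCompact_Icc).exists_bound_of_continuousOn hHcont
  set S : Set ℝ := {d : ℝ | ∃ P ∈ E, ∃ Q ∈ E, dist P Q ≤ δ ∧ d = |H P - H Q|} with hSdef
  have hBdd : BddAbove S := by
    refine ⟨2*M, ?_⟩
    rintro d ⟨P, hP, Q, hQ, -, rfl⟩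
    have h1 := hM P hP
    have h2 := hM Q hQ
    rw [Real.norm_eq_abs] at h1 h2
    calc |H P - H Q| ≤ |H P| + |H Q| := abs_sub _ _
    _ ≤ 2*M := by linarith
  set ω : ℝ := sSup S with hωdef
  have hmodω : modCont2 H δ E = ω := rfl
  have hle : ∀ P ∈ E, ∀ Q ∈ E, dist P Q ≤ δ → |H P - H Q| ≤ ω :=
    fun P hP Q hQ hd => le_csSup hBdd ⟨P, hP, Q, hQ, hd, rfl⟩
  have h00E : ((0:ℝ), (0:ℝ)) ∈ E := by
    constructor <;> exact ⟨le_refl 0, zero_le_one⟩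
  have hω0 : 0 ≤ ω := by
    have := le_csSup hBdd (show (0:ℝ) ∈ S from ⟨(0,0), h00E, (0,0), h00E, by simp [hδpos.le], by simp⟩)
    linarith
  have hH0 : ∀ y : ℝ, H (0, y) = 0 := by intro y; rw [hH]; simp [h0]
  -- key pointwise bound
  have hHb : ∀ x y : ℝ, 0 ≤ x → x ≤ δ → 0 ≤ y → y ≤ 1 → |H (x, y)| ≤ ω := by
    intro x y hx hxδ hy hy1
    have hPE : ((x, y) : ℝ × ℝ) ∈ E := ⟨⟨hx, le_trans hxδ hδle⟩, ⟨hy, hy1⟩⟩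
    have hQE : ((0, y) : ℝ × ℝ) ∈ E := ⟨⟨le_refl 0, zero_le_one⟩, ⟨hy, hy1⟩⟩
    have hd : dist ((x, y) : ℝ × ℝ) ((0, y) : ℝ × ℝ) ≤ δ := by
      rw [Prod.dist_eq]
      simp only [Real.dist_eq, sub_zero, sub_self, abs_zero]
      rw [abs_of_nonneg hx]
      exact max_le hxδ hδpos.le
    have := hle _ hPE _ hQE hd
    rwa [hH0 y, sub_zero] at this
  set f : ℝ → ℝ := fun x => h x - x * h 1 with hfdef
  have hf : ∀ x y : ℝ, f (x + y) = f x + f y + H (x, y) := by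
    intro x y; simp only [hfdef, hH x y]; ring
  have hf1 : f 1 = 0 := by simp [hfdef]
  have hf0 : f 0 = 0 := by simp [hfdef, h0]
  -- main claim by strong induction
  have key : ∀ q : ℕ, 0 < q → 2*q < n → (q:ℝ)/n ≤ δ → |f ((q:ℝ)/n)| ≤ 2*ω := by
    intro q
    induction q using Nat.strong_induction_on with
    | _ q IH =>
      intro hq hqn hqδ
      set s : ℝ := (q:ℝ)/n with hsdef
      have hs0 : 0 ≤ s := by positivity
      set m : ℕ := n / q with hmdef
      set r : ℕ := n % q with hrdef
      have hmq : m * q + r = n := Nat.div_add_mod' n q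
      have hm2 : 2 ≤ m := by
        rw [hmdef, Nat.le_div_iff_mul_le hq]; omega
      have hrq : r < q := Nat.mod_lt _ hq
      have hmqR : ((m:ℝ) * q + r) = n := by exact_mod_cast hmq
      have hms : (m:ℝ) * s + (r:ℝ)/n = 1 := by
        rw [hsdef]; field_simp; linarith [hmqR]
      have hms0 : 0 ≤ (m:ℝ) * s := by positivity
      have hrn0 : 0 ≤ (r:ℝ)/n := by positivity
      have hms1 : (m:ℝ) * s ≤ 1 := by linarith
      -- telescoping
      have tele : ∀ k : ℕ, 1 ≤ k → k ≤ m → |f ((k:ℝ) * s) - (k:ℝ) * f s| ≤ ((k:ℝ) - 1) * ω := by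
        intro k
        induction k with
        | zero => intro hk; omega
        | succ k IHk =>
          intro _ hkm
          by_cases hk0 : k = 0
          · subst hk0; simp
          · have hk1 : 1 ≤ k := Nat.one_le_iff_ne_zero.2 hk0
            have IH' := IHk hk1 (by omega)
            have hks1 : (k:ℝ) * s ≤ 1 := by
              have : (k:ℝ) ≤ m := by exact_mod_cast Nat.le_of_succ_le hkm
              nlinarith
            have hstep : f (((k:ℕ)+1:ℝ) * s) = f s + f ((k:ℝ) * s) + H (s, (k:ℝ)*s) := by
              have := hf s ((k:ℝ)*s)
              rw [show s + (k:ℝ)*s = ((k:ℕ)+1:ℝ)*s by ring] at this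
              exact this
            have hHk : |H (s, (k:ℝ)*s)| ≤ ω := hHb s ((k:ℝ)*s) hs0 hqδ (by positivity) hks1
            have hcast : ((k+1:ℕ):ℝ) = (k:ℝ) + 1 := by push_cast; ring
            rw [hcast]
            have habs := abs_add_le (f ((k:ℝ)*s) - (k:ℝ)*f s) (H (s, (k:ℝ)*s))
            have heq : f (((k:ℝ)+1) * s) - ((k:ℝ)+1) * f s
                = (f ((k:ℝ)*s) - (k:ℝ)*f s) + H (s, (k:ℝ)*s) := by
              rw [show ((k:ℝ)+1) * s = ((k:ℕ)+1:ℝ)*s by push_cast; ring, hstep]; push_cast; ring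
            rw [heq]
            calc |(f ((k:ℝ)*s) - (k:ℝ)*f s) + H (s, (k:ℝ)*s)|
                ≤ |f ((k:ℝ)*s) - (k:ℝ)*f s| + |H (s, (k:ℝ)*s)| := habs
              _ ≤ ((k:ℝ) - 1)*ω + ω := by linarith
              _ = ((k:ℝ) + 1 - 1)*ω := by ring
      have hM1 : |f ((m:ℝ)*s) - (m:ℝ)*f s| ≤ ((m:ℝ) - 1) * ω := tele m (by omega) le_rfl
      -- the remainder term
      have hrn : |f ((r:ℝ)/n)| ≤ 2*ω := by
        rcases Nat.eq_zero_or_pos r with h0r | hposr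
        · rw [h0r]; push_cast; rw [zero_div, hf0, abs_zero]; positivity
        · refine IH r hrq hposr (by omega) ?_
          have : (r:ℝ) ≤ q := by exact_mod_cast hrq.le
          calc (r:ℝ)/n ≤ (q:ℝ)/n := by gcongr
            _ ≤ δ := hqδ
      -- closing identity
      have hclose : |f ((m:ℝ)*s) + f ((r:ℝ)/n)| ≤ ω := by
        have h1 := hf ((r:ℝ)/n) ((m:ℝ)*s)
        rw [show (r:ℝ)/n + (m:ℝ)*s = 1 by linarith, hf1] at h1
        have hrnδ : (r:ℝ)/n ≤ δ := by
          have : (r:ℝ) ≤ q := by exact_mod_cast hrq.le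
          calc (r:ℝ)/n ≤ (q:ℝ)/n := by gcongr
            _ ≤ δ := hqδ
        have hHc : |H ((r:ℝ)/n, (m:ℝ)*s)| ≤ ω := hHb _ _ hrn0 hrnδ hms0 hms1
        rw [show f ((m:ℝ)*s) + f ((r:ℝ)/n) = -(H ((r:ℝ)/n, (m:ℝ)*s)) by linarith, abs_neg]
        exact hHc
      -- combine
      have hmR : (2:ℝ) ≤ m := by exact_mod_cast hm2
      exact combine_arith (m:ℝ) (f ((m:ℝ)*s)) (f s) (f ((r:ℝ)/n)) ω hmR hω0 hM1 hclose hrn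
  have hkey := key p hp hpn le_rfl
  rw [hmodω]
  have heq : h ((p:ℝ)/n) = f ((p:ℝ)/n) + ((p:ℝ)/n) * h 1 := by
    simp only [hfdef]; ring
  have habs : |h ((p:ℝ)/n)| ≤ |f ((p:ℝ)/n)| + ((p:ℝ)/n) * |h 1| := by
    rw [heq]
    calc |f ((p:ℝ)/n) + ((p:ℝ)/n) * h 1| ≤ |f ((p:ℝ)/n)| + |((p:ℝ)/n) * h 1| := abs_add_le _ _
      _ = |f ((p:ℝ)/n)| + ((p:ℝ)/n) * |h 1| := by rw [abs_mul, abs_of_nonneg hδpos.le]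
  have hfin : ((p:ℝ)/n) * |h 1| ≤ 2 * p * |h 1| / n := by
    rw [div_mul_eq_mul_div]
    gcongr ?_ / _
    nlinarith [abs_nonneg (h 1), (show (0:ℝ) ≤ p by positivity)]
  linarith
end

section
/- Let g : ℝ → ℝ and suppose F(x,y) = g(x+y) - g(x) - g(y) defines a continuous function on ℝ². Then for every δ ∈ (0, 1/2) ∩ ℚ and every M ≥ 1, the modulus of continuity of g restricted to [-M,M] ∩ ℚ satisfies ω(g; δ; [-M,M] ∩ ℚ) ≤ 2δ·|g(1) - g(0)| + 3·ω(F; δ; [-M,M]²). -/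
/-- Modulus of continuity of a univariate function on a subset of the line. -/
noncomputable def modCont1 (f : ℝ → ℝ) (δ : ℝ) (E : Set ℝ) : ℝ :=
  sSup {d : ℝ | ∃ x ∈ E, ∃ y ∈ E, |x - y| ≤ δ ∧ d = |f x - f y|}

set_option maxHeartbeats 1000000 in
theorem modulus_bound_on_rationals (g : ℝ → ℝ) (F : ℝ × ℝ → ℝ)
    (hF : ∀ x y : ℝ, F (x, y) = g (x + y) - g x - g y)
    (hFcont : Continuous F) :
    ∀ δ : ℝ, 0 < δ → δ < 1 / 2 → (∃ q : ℚ, (q : ℝ) = δ) → ∀ M : ℝ, 1 ≤ M →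
      modCont1 g δ (Set.Icc (-M) M ∩ {x : ℝ | ∃ q : ℚ, (q : ℝ) = x}) ≤
        2 * δ * |g 1 - g 0| + 3 * modCont2 F δ (Set.Icc (-M) M ×ˢ Set.Icc (-M) M) := by
  intro δ hδ0 hδ2 _ M hM
  set A := |g 1 - g 0| with hA
  have hA0 : 0 ≤ A := abs_nonneg _
  set S := Set.Icc (-M) M ×ˢ Set.Icc (-M) M with hS
  set ω := modCont2 F δ S with hω
  have hωdef : ω = sSup {d : ℝ | ∃ P ∈ S, ∃ Q ∈ S, dist P Q ≤ δ ∧ d = |F P - F Q|} := rfl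
  have hδM : δ ≤ M := by linarith
  have hFg : ∀ x y : ℝ, g (x + y) = g x + g y + F (x, y) := by
    intro x y; rw [hF]; ring
  obtain ⟨C, hC⟩ : ∃ C, ∀ z ∈ S, ‖F z‖ ≤ C :=
    ((isCompact_Icc.prod isCompact_Icc).exists_bound_of_continuousOn hFcont.continuousOn)
  have hbdd : BddAbove {d : ℝ | ∃ P ∈ S, ∃ Q ∈ S, dist P Q ≤ δ ∧ d = |F P - F Q|} := by
    refine ⟨2 * C, ?_⟩
    rintro d ⟨P, hP, Q, hQ, -, rfl⟩
    have h1 := hC P hP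
    have h2 := hC Q hQ
    rw [Real.norm_eq_abs] at h1 h2
    calc |F P - F Q| ≤ |F P| + |F Q| := abs_sub _ _
      _ ≤ 2 * C := by linarith
  have hmem : ∀ t : ℝ, 0 ≤ t → t ≤ 1 → t ∈ Set.Icc (-M) M := by
    intro t h0 h1; exact ⟨by linarith, by linarith⟩
  have h0M : (0:ℝ) ∈ Set.Icc (-M) M := hmem 0 le_rfl zero_le_one
  have hω0 : 0 ≤ ω := by
    rw [hωdef]
    refine le_csSup hbdd ?_
    exact ⟨(0,0), Set.mk_mem_prod h0M h0M, (0,0), Set.mk_mem_prod h0M h0M,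
      by simp [hδ0.le], by simp⟩
  -- key estimate: same first coordinate
  have key : ∀ a b : ℝ, a ∈ Set.Icc (-M) M → b ∈ Set.Icc (-M) M → |b| ≤ δ →
      |F (a, b) + g 0| ≤ ω := by
    intro a b ha hb hbδ
    have hd : dist ((a, b) : ℝ × ℝ) ((a, 0) : ℝ × ℝ) ≤ δ := by
      rw [Prod.dist_eq]
      simp only [Real.dist_eq, sub_self, abs_zero, sub_zero]
      exact max_le hδ0.le hbδ
    have hFa0 : F (a, 0) = - g 0 := by rw [hF]; simp
    have h1 : |F (a, b) - F (a, 0)| ≤ ω := by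
      rw [hωdef]
      exact le_csSup hbdd ⟨(a, b), Set.mk_mem_prod ha hb, (a, 0), Set.mk_mem_prod ha h0M, hd, rfl⟩
    rwa [hFa0, sub_neg_eq_add] at h1
  -- telescoping
  have tele : ∀ h : ℝ, 0 ≤ h → h ≤ δ → ∀ n : ℕ, 1 ≤ n → (n : ℝ) * h ≤ 1 →
      |g ((n : ℝ) * h) - g 0 - (n : ℝ) * (g h - g 0)| ≤ ((n : ℝ) - 1) * ω := by
    intro h h0 hhδ n hn
    induction n, hn using Nat.le_induction with
    | base =>
      intro _
      simp only [Nat.cast_one, one_mul]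
      simp
    | succ m hm ih =>
      intro hle
      push_cast at hle ⊢
      have hmh1 : (m : ℝ) * h ≤ 1 := by nlinarith [(by exact_mod_cast hm : (1:ℝ) ≤ (m : ℝ))]
      have hprev := ih hmh1
      have hmh0 : 0 ≤ (m : ℝ) * h := by positivity
      have he : |F ((m : ℝ) * h, h) + g 0| ≤ ω := by
        refine key _ _ (hmem _ hmh0 hmh1) (hmem h h0 (by linarith)) ?_
        rwa [abs_of_nonneg h0]
      have hsplit : g (((m : ℝ) + 1) * h) = g ((m : ℝ) * h) + g h + F ((m : ℝ) * h, h) := by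
        have := hFg ((m : ℝ) * h) h
        rw [show (m : ℝ) * h + h = ((m : ℝ) + 1) * h by ring] at this
        exact this
    -- combine
      have heq : g (((m : ℝ) + 1) * h) - g 0 - ((m : ℝ) + 1) * (g h - g 0)
          = (g ((m : ℝ) * h) - g 0 - (m : ℝ) * (g h - g 0)) + (F ((m : ℝ) * h, h) + g 0) := by
        rw [hsplit]; ring
      rw [heq]
      calc |(g ((m : ℝ) * h) - g 0 - (m : ℝ) * (g h - g 0)) + (F ((m : ℝ) * h, h) + g 0)|
          ≤ |g ((m : ℝ) * h) - g 0 - (m : ℝ) * (g h - g 0)| + |F ((m : ℝ) * h, h) + g 0| :=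
            abs_add_le _ _
        _ ≤ ((m : ℝ) - 1) * ω + ω := add_le_add hprev he
        _ = ((m : ℝ) + 1 - 1) * ω := by ring
  -- core recursion step
  have core : ∀ h : ℝ, ∀ n : ℕ, 0 ≤ h → h ≤ δ → 2 ≤ n → (n : ℝ) * h ≤ 1 →
      1 ≤ ((n : ℝ) + 1) * h →
      |g h - g 0| ≤ (A + |g (1 - (n : ℝ) * h) - g 0|) / (n : ℝ) + ω := by
    intro h n h0 hhδ hn2 hnh hnh1
    have hn0 : (0:ℝ) < (n : ℝ) := by
      have : (2:ℝ) ≤ (n : ℝ) := by exact_mod_cast hn2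
      linarith
    have h'0 : 0 ≤ 1 - (n : ℝ) * h := by linarith
    have h'h : 1 - (n : ℝ) * h ≤ h := by nlinarith
    have hD := tele h h0 hhδ n (by omega) hnh
    have he : |F ((n : ℝ) * h, 1 - (n : ℝ) * h) + g 0| ≤ ω := by
      refine key _ _ (hmem _ (by positivity) hnh) (hmem _ h'0 (by linarith)) ?_
      rw [abs_of_nonneg h'0]; linarith
    have hg1 : g 1 = g ((n : ℝ) * h) + g (1 - (n : ℝ) * h) + F ((n : ℝ) * h, 1 - (n : ℝ) * h) := by
      have := hFg ((n : ℝ) * h) (1 - (n : ℝ) * h)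
      rw [show (n : ℝ) * h + (1 - (n : ℝ) * h) = 1 by ring] at this
      exact this
    have hid : (n : ℝ) * (g h - g 0) =
        (g 1 - g 0) - (g (1 - (n : ℝ) * h) - g 0)
          - (g ((n : ℝ) * h) - g 0 - (n : ℝ) * (g h - g 0))
          - (F ((n : ℝ) * h, 1 - (n : ℝ) * h) + g 0) := by
      rw [hg1]; ring
    have hb1 : g 1 - g 0 ≤ A := by rw [hA]; exact le_abs_self _
    have hb1' : -A ≤ g 1 - g 0 := by rw [hA]; exact neg_abs_le _
    have hb2 := le_abs_self (g (1 - (n : ℝ) * h) - g 0)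
    have hb2' := neg_abs_le (g (1 - (n : ℝ) * h) - g 0)
    have hbD := abs_le.mp hD
    have hbe := abs_le.mp he
    have hbig : |(n : ℝ) * (g h - g 0)| ≤ A + |g (1 - (n : ℝ) * h) - g 0| + (n : ℝ) * ω := by
      rw [hid]
      refine abs_le.mpr ⟨by linarith [hbD.1, hbD.2, hbe.1, hbe.2], by linarith [hbD.1, hbD.2, hbe.1, hbe.2]⟩
    rw [abs_mul, abs_of_pos hn0] at hbig
    have hgoal : |g h - g 0| ≤ (A + |g (1 - (n : ℝ) * h) - g 0| + (n : ℝ) * ω) / (n : ℝ) := by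
      rw [le_div_iff₀ hn0]
      linarith [hbig]
    have : (A + |g (1 - (n : ℝ) * h) - g 0| + (n : ℝ) * ω) / (n : ℝ)
        = (A + |g (1 - (n : ℝ) * h) - g 0|) / (n : ℝ) + ω := by
      field_simp
    linarith [hgoal, this.le, this.ge]
  -- main induction
  have main : ∀ p q : ℕ, 0 < q → (p : ℝ) / (q : ℝ) ≤ δ →
      (|g ((p : ℝ) / (q : ℝ)) - g 0| ≤ 2 * ((p : ℝ) / (q : ℝ)) * A + 2 * ω) ∧
      (1/4 < (p : ℝ) / (q : ℝ) → (p : ℝ) / (q : ℝ) ≤ 1/3 →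
        |g ((p : ℝ) / (q : ℝ)) - g 0| ≤ (1 - 2 * ((p : ℝ) / (q : ℝ))) * A + 2 * ω) := by
    intro p
    induction p using Nat.strong_induction_on with
    | _ p IH =>
    intro q hq hhδ
    have hq0 : (0:ℝ) < (q : ℝ) := by exact_mod_cast hq
    rcases Nat.eq_zero_or_pos p with hp0 | hp0
    · subst hp0
      constructor
      · simp only [Nat.cast_zero, zero_div, mul_zero, zero_mul, sub_self, abs_zero]
        linarith
      · intro hlt _
        exfalso
        simp only [Nat.cast_zero, zero_div] at hlt
        linarith
    · have hp0' : (0:ℝ) < (p : ℝ) := by exact_mod_cast hp0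
      have h0 : 0 ≤ (p : ℝ) / (q : ℝ) := by positivity
      have hhalf : (p : ℝ) / (q : ℝ) < 1/2 := lt_of_le_of_lt hhδ hδ2
      have h2pq : 2 * p < q := by
        have : (p : ℝ) < (q : ℝ) / 2 := by
          rw [div_lt_iff₀ hq0] at hhalf; linarith
        have : ((2 * p : ℕ) : ℝ) < (q : ℝ) := by push_cast; linarith
        exact_mod_cast this
      obtain ⟨n, hn⟩ : ∃ n, n = q / p := ⟨_, rfl⟩
      have hn2 : 2 ≤ n := by
        rw [hn]; exact (Nat.le_div_iff_mul_le hp0).mpr (by omega)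
      have hnpq : n * p ≤ q := by
        rw [hn]; have := Nat.div_mul_le_self q p; omega
      have hqnp : q < (n + 1) * p := by
        rw [hn]
        have h2 := Nat.mod_lt q hp0
        calc q = p * (q / p) + q % p := (Nat.div_add_mod q p).symm
          _ < p * (q / p) + p := Nat.add_lt_add_left h2 _
          _ = (q / p + 1) * p := by ring
      obtain ⟨p', hp'⟩ : ∃ x, x = q - n * p := ⟨_, rfl⟩
      have hp'p : p' < p := by
        rw [hp']
        refine (tsub_lt_iff_right hnpq).mpr ?_
        rw [show p + n * p = (n + 1) * p by ring]
        exact hqnp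
      have hnr : (2:ℝ) ≤ (n : ℝ) := by exact_mod_cast hn2
      have hreal : ((p' : ℕ) : ℝ) / (q : ℝ) = 1 - (n : ℝ) * ((p : ℝ) / (q : ℝ)) := by
        rw [hp']
        push_cast [Nat.cast_sub hnpq]
        field_simp
      have hnh1 : (n : ℝ) * ((p : ℝ) / (q : ℝ)) ≤ 1 := by
        rw [show (n : ℝ) * ((p : ℝ) / (q : ℝ)) = ((n * p : ℕ) : ℝ) / (q : ℝ) by push_cast; ring,
          div_le_one hq0]
        exact_mod_cast hnpq
      have h1nh : 1 ≤ ((n : ℝ) + 1) * ((p : ℝ) / (q : ℝ)) := by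
        rw [show ((n : ℝ) + 1) * ((p : ℝ) / (q : ℝ)) = (((n + 1) * p : ℕ) : ℝ) / (q : ℝ) by
          push_cast; ring, le_div_iff₀ hq0, one_mul]
        exact_mod_cast hqnp.le
      have hcore := core ((p : ℝ) / (q : ℝ)) n h0 hhδ hn2 hnh1 h1nh
      rw [← hreal] at hcore
      have hh' : ((p' : ℕ) : ℝ) / (q : ℝ) ≤ δ := by
        rw [hreal]
        have : 1 - (n : ℝ) * ((p : ℝ) / (q : ℝ)) ≤ (p : ℝ) / (q : ℝ) := by nlinarith
        linarith
      constructor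
      · -- part 1
        by_cases hcase : 3 ≤ 4 * ((n : ℝ) * ((p : ℝ) / (q : ℝ)))
        · have IH1 := (IH p' hp'p q hq hh').1
          rw [hreal] at IH1
          have hstep : (A + |g (1 - (n : ℝ) * ((p : ℝ) / (q : ℝ))) - g 0|) / (n : ℝ)
              ≤ 2 * ((p : ℝ) / (q : ℝ)) * A + ω := by
            rw [div_le_iff₀ (by linarith : (0:ℝ) < (n : ℝ))]
            nlinarith [mul_nonneg (by linarith : (0:ℝ) ≤ 4 * ((n : ℝ) * ((p : ℝ) / (q : ℝ))) - 3) hA0,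
              mul_nonneg (by linarith : (0:ℝ) ≤ (n : ℝ) - 2) hω0]
          have hrw : |g (((p' : ℕ) : ℝ) / (q : ℝ)) - g 0| = |g (1 - (n : ℝ) * ((p : ℝ) / (q : ℝ))) - g 0| := by
            rw [hreal]
          rw [hrw] at hcore
          linarith
        · push_neg at hcase
          have hexp : ((n : ℝ) + 1) * ((p : ℝ) / (q : ℝ))
              = (n : ℝ) * ((p : ℝ) / (q : ℝ)) + (p : ℝ) / (q : ℝ) := by ring
          have h14 : 1/4 < (p : ℝ) / (q : ℝ) := by linarith [hexp, hcase, h1nh]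
          have hneq2 : n = 2 := by
            by_contra hne
            have h3n : (3:ℝ) ≤ (n : ℝ) := by
              have : 3 ≤ n := by omega
              exact_mod_cast this
            have hmul : 3 * ((p : ℝ) / (q : ℝ)) ≤ (n : ℝ) * ((p : ℝ) / (q : ℝ)) :=
              mul_le_mul_of_nonneg_right h3n h0
            linarith
          have hcast2 : ((n : ℕ) : ℝ) = 2 := by rw [hneq2]; norm_num
          rw [hcast2] at hcore hcase h1nh hreal
          -- p/q ∈ (1/3, 3/8), h' = 1 - 2h ∈ (1/4, 1/3)
          have h13 : 1/3 < (p : ℝ) / (q : ℝ) := by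
            have hplt : ((p' : ℕ) : ℝ) < (p : ℝ) := by exact_mod_cast hp'p
            have hplt2 : ((p' : ℕ) : ℝ) / (q : ℝ) < (p : ℝ) / (q : ℝ) :=
              (div_lt_div_iff_of_pos_right hq0).mpr hplt
            rw [hreal] at hplt2
            linarith
          have h'14 : 1/4 < ((p' : ℕ) : ℝ) / (q : ℝ) := by rw [hreal]; linarith
          have h'13 : ((p' : ℕ) : ℝ) / (q : ℝ) ≤ 1/3 := by rw [hreal]; linarith
          have IH2 := (IH p' hp'p q hq hh').2 h'14 h'13
          have hprod : ((p' : ℕ) : ℝ) / (q : ℝ) * A = (1 - 2 * ((p : ℝ) / (q : ℝ))) * A := by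
            rw [hreal]
          linarith [hprod]
      · -- part 2
        intro h14 h13
        have hq4p : q < 4 * p := by
          have : (q : ℝ) < 4 * (p : ℝ) := by
            rw [lt_div_iff₀ hq0] at h14
            linarith
          exact_mod_cast this
        have h3pq : 3 * p ≤ q := by
          have : 3 * (p : ℝ) ≤ (q : ℝ) := by
            rw [div_le_iff₀ hq0] at h13
            linarith
          exact_mod_cast this
        have hneq3 : n = 3 := by
          rw [hn]
          have a := (Nat.le_div_iff_mul_le hp0).mpr h3pq
          have b := (Nat.div_lt_iff_lt_mul hp0).mpr hq4p
          omega
        have hcast3 : ((n : ℕ) : ℝ) = 3 := by rw [hneq3]; norm_num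
        rw [hcast3] at hcore hreal
        have IH1 := (IH p' hp'p q hq hh').1
        have hprod : ((p' : ℕ) : ℝ) / (q : ℝ) * A = (1 - 3 * ((p : ℝ) / (q : ℝ))) * A := by
          rw [hreal]
        linarith [hprod]
  -- final assembly
  have main2 : ∀ u v : ℝ,
      u ∈ Set.Icc (-M) M ∩ {x : ℝ | ∃ q : ℚ, (q : ℝ) = x} →
      v ∈ Set.Icc (-M) M ∩ {x : ℝ | ∃ q : ℚ, (q : ℝ) = x} →
      v ≤ u → u - v ≤ δ → |g u - g v| ≤ 2 * δ * A + 3 * ω := by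
    rintro u v ⟨huI, a, ha⟩ ⟨hvI, b, hb⟩ hvu huv
    have hr : ((a - b : ℚ) : ℝ) = u - v := by push_cast; rw [ha, hb]
    set r : ℚ := a - b with hrdef
    have hr0 : 0 ≤ r := by
      rw [← Rat.cast_nonneg (K := ℝ), hr]
      linarith
    have hnum0 : 0 ≤ r.num := Rat.num_nonneg.mpr hr0
    have hq : 0 < r.den := r.pos
    have hpq : ((r.num.toNat : ℕ) : ℝ) / ((r.den : ℕ) : ℝ) = u - v := by
      rw [← hr, Rat.cast_def]
      congr 1
      exact_mod_cast Int.toNat_of_nonneg hnum0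
    have hδ' : ((r.num.toNat : ℕ) : ℝ) / ((r.den : ℕ) : ℝ) ≤ δ := by rw [hpq]; exact huv
    have h1 := (main r.num.toNat r.den hq hδ').1
    rw [hpq] at h1
    have hguv : g u = g v + g (u - v) + F (v, u - v) := by
      have := hFg v (u - v)
      rw [show v + (u - v) = u by ring] at this
      exact this
    have huv0 : 0 ≤ u - v := by linarith
    have he : |F (v, u - v) + g 0| ≤ ω := by
      refine key v (u - v) hvI (hmem _ huv0 (by linarith)) ?_
      rw [abs_of_nonneg huv0]; exact huv
    have heq : g u - g v = (g (u - v) - g 0) + (F (v, u - v) + g 0) := by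
      rw [hguv]; ring
    rw [heq]
    calc |(g (u - v) - g 0) + (F (v, u - v) + g 0)|
        ≤ |g (u - v) - g 0| + |F (v, u - v) + g 0| := abs_add_le _ _
      _ ≤ (2 * (u - v) * A + 2 * ω) + ω := add_le_add h1 he
      _ ≤ 2 * δ * A + 3 * ω := by nlinarith [mul_le_mul_of_nonneg_right huv hA0]
  unfold modCont1
  apply Real.sSup_le
  · rintro d ⟨x, hx, y, hy, hxy, rfl⟩
    rcases le_total y x with hle | hle
    · have := main2 x y hx hy hle (by rw [abs_of_nonneg (by linarith)] at hxy; linarith)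
      linarith
    · rw [abs_sub_comm]
      have := main2 y x hy hx hle (by rw [abs_sub_comm, abs_of_nonneg (by linarith)] at hxy; linarith)
      linarith
  · have : 0 ≤ 2 * δ * A := by positivity
    linarith
end

section
/- Let g : ℝ → ℝ and suppose F(x,y) = g(x+y) - g(x) - g(y) is continuous on ℝ². Define u(t) = g(t) - (g(1) - g(0))·t. Then u(1) = u(0), F(x,y) = u(x+y) - u(x) - u(y) for all x, y, and the restriction of u to ℚ is uniformly continuous on [-M,M] ∩ ℚ for every M ≥ 1. -/
/-!
If `F = δg`, i.e. `F (x, y) = g (x + y) - g x - g y`, is continuous, then `F` is also `δc` for a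
continuous `c`, obtained by replacing the (possibly non-integrable) `g` by integrals of `F` alone.
Hence `g - c` is additive, so `ℚ`-linear, and on `ℚ` the function `g` (and with it `u`) agrees
with a continuous function, which is uniformly continuous on the compact `[-M, M]`.
-/

open intervalIntegral

theorem integral_comp_add_right_sub_self {φ : ℝ → ℝ} (hφ : Continuous φ) (a b : ℝ) :
    ∫ t in 0..b, (φ (t + a) - φ t) =
      (∫ t in 0..a + b, φ t) - (∫ t in 0..a, φ t) - ∫ t in 0..b, φ t := by
  rw [integral_sub (Continuous.intervalIntegrable (by fun_prop) _ _) (hφ.intervalIntegrable _ _),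
    integral_comp_add_right, zero_add, add_comm b a,
    ← integral_interval_sub_left (hφ.intervalIntegrable _ _) (hφ.intervalIntegrable _ _)]

/-- If `F = δg` with `g` locally integrable, this equals `g x - x * g 1`. -/
noncomputable def cocyclePotential (F : ℝ × ℝ → ℝ) (x : ℝ) : ℝ :=
  (∫ t in 0..x, F (t, 1)) - ∫ t in 0..1, F (t, x)

theorem continuous_cocyclePotential {F : ℝ × ℝ → ℝ} (hF : Continuous F) :
    Continuous (cocyclePotential F) :=
  (continuous_primitive (fun _ _ => Continuous.intervalIntegrable (by fun_prop) _ _) 0).sub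
    (continuous_parametric_intervalIntegral_of_continuous' (f := fun x t => F (t, x))
      (by fun_prop) 0 1)

theorem cocyclePotential_add_sub {F : ℝ × ℝ → ℝ} (hF : Continuous F)
    (hcocycle : ∀ a b c, F (a, b) + F (a + b, c) = F (a, b + c) + F (b, c)) (x y : ℝ) :
    cocyclePotential F (x + y) - cocyclePotential F x - cocyclePotential F y = F (x, y) := by
  have hφ : Continuous fun s => F (x, s) := by fun_prop
  have hcont : ∀ z, Continuous fun t => F (t, z) := fun z => by fun_prop
  have hI : (∫ t in 0..x + y, F (t, 1)) - (∫ t in 0..x, F (t, 1)) - ∫ t in 0..y, F (t, 1) =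
      ∫ t in 0..y, (F (x, t + 1) - F (x, t)) := by
    rw [← integral_comp_add_right_sub_self (hcont 1) x y]
    refine integral_congr fun t _ => ?_
    rw [add_comm t x]
    linarith [hcocycle x t 1]
  have hJ : (∫ t in 0..1, F (t, x + y)) - (∫ t in 0..1, F (t, x)) - ∫ t in 0..1, F (t, y) =
      (∫ t in 0..1, (F (x, t + y) - F (x, t))) - F (x, y) := by
    rw [← integral_sub ((hcont _).intervalIntegrable _ _) ((hcont _).intervalIntegrable _ _),
      ← integral_sub (Continuous.intervalIntegrable (by fun_prop) _ _)
        ((hcont _).intervalIntegrable _ _)]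
    calc _ = ∫ t in 0..1, (F (x, t + y) - F (x, t) - F (x, y)) := by
          refine integral_congr fun t _ => ?_
          have := hcocycle x t y
          rw [add_comm x t] at this
          linarith [hcocycle t x y]
      _ = _ := by
          rw [integral_sub (Continuous.intervalIntegrable (by fun_prop) _ _)
            intervalIntegrable_const, integral_const, sub_zero, one_smul]
  have hshift : ∫ t in 0..y, (F (x, t + 1) - F (x, t)) =
      ∫ t in 0..1, (F (x, t + y) - F (x, t)) := by
    rw [integral_comp_add_right_sub_self hφ, integral_comp_add_right_sub_self hφ, add_comm 1 y,
      sub_right_comm]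
  simp only [cocyclePotential]
  linarith

theorem exists_continuous_eq_on_rat_of_continuous_coboundary {g : ℝ → ℝ} {F : ℝ × ℝ → ℝ}
    (hF : Continuous F) (hg : ∀ x y, F (x, y) = g (x + y) - g x - g y) :
    ∃ v : ℝ → ℝ, Continuous v ∧ ∀ r : ℚ, g r = v r := by
  have hc := cocyclePotential_add_sub hF fun a b c => by simp only [hg, add_assoc]; ring
  let a : ℝ →+ ℝ := AddMonoidHom.mk' (fun t => g t - cocyclePotential F t)
    fun x y => by linarith [hc x y, hg x y]
  refine ⟨fun t => cocyclePotential F t + t * a 1,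
    (continuous_cocyclePotential hF).add (continuous_id.mul continuous_const), fun r => ?_⟩
  have ha := map_ratCast_smul a ℝ ℝ r 1
  show g r = cocyclePotential F r + r * a 1
  simp only [AddMonoidHom.mk'_apply, smul_eq_mul, mul_one, a] at ha ⊢
  linarith

theorem exists_pos_abs_sub_lt_of_eq_on_rat {u v : ℝ → ℝ} (hv : Continuous v)
    (huv : ∀ r : ℚ, u r = v r) (M : ℝ) {ε : ℝ} (hε : 0 < ε) :
    ∃ δ : ℝ, 0 < δ ∧ ∀ r₁ r₂ : ℚ, |(r₁ : ℝ)| ≤ M → |(r₂ : ℝ)| ≤ M →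
      |(r₁ : ℝ) - (r₂ : ℝ)| < δ → |u r₁ - u r₂| < ε := by
  obtain ⟨δ, hδ, hvδ⟩ := Metric.uniformContinuousOn_iff.mp
    ((isCompact_Icc (a := -M) (b := M)).uniformContinuousOn_of_continuous hv.continuousOn) ε hε
  refine ⟨δ, hδ, fun r₁ r₂ h₁ h₂ h₁₂ => ?_⟩
  rw [huv, huv, ← Real.dist_eq]
  exact hvδ _ (abs_le.mp h₁) _ (abs_le.mp h₂) (by rwa [Real.dist_eq])

theorem u_uniformly_continuous_on_rationals (g : ℝ → ℝ) (F : ℝ × ℝ → ℝ)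
    (hF : ∀ x y : ℝ, F (x, y) = g (x + y) - g x - g y)
    (hFcont : Continuous F)
    (u : ℝ → ℝ) (hu : ∀ t : ℝ, u t = g t - (g 1 - g 0) * t) :
    u 1 = u 0 ∧
      (∀ x y : ℝ, F (x, y) = u (x + y) - u x - u y) ∧
      ∀ M : ℝ, 1 ≤ M → ∀ ε : ℝ, 0 < ε → ∃ δ : ℝ, 0 < δ ∧
        ∀ r₁ r₂ : ℚ, |(r₁ : ℝ)| ≤ M → |(r₂ : ℝ)| ≤ M →
          |(r₁ : ℝ) - (r₂ : ℝ)| < δ → |u r₁ - u r₂| < ε := by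
  refine ⟨by rw [hu, hu]; ring, fun x y => by rw [hu, hu, hu, hF]; ring, fun M _ ε hε => ?_⟩
  obtain ⟨v, hv, hgv⟩ := exists_continuous_eq_on_rat_of_continuous_coboundary hFcont hF
  refine exists_pos_abs_sub_lt_of_eq_on_rat (v := fun t => v t - (g 1 - g 0) * t)
    (by fun_prop) (fun r => ?_) M hε
  rw [hu, hgv]
end

section
/- Suppose F : ℝ × ℝ → ℝ is continuous and F(x,y) = g(x+y) - g(x) - g(y) for some (arbitrarily behaved) function g : ℝ → ℝ. Then there exists a continuous function f : ℝ → ℝ such that F(x,y) = f(x+y) - f(x) - f(y) for all real x, y. -/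
/-! `F = δg` is a symmetric 2-cocycle, and every continuous one is the coboundary of the continuous
function `f t = ∫₀ᵗ F(1, s) ds - ∫₀¹ F(t, s) ds`: with `Φₓ t = ∫₀ᵗ F(x, s) ds`, the cocycle
identity turns the coboundary of the first term into `Φₓ(y + 1) - Φₓ y - Φₓ 1` and that of the
second into the same expression minus `F(x, y)`. -/

open intervalIntegral

section

variable {E : Type*} [NormedAddCommGroup E] [NormedSpace ℝ E]

theorem intervalIntegral.integral_comp_add_right_sub {φ : ℝ → E} (hφ : Continuous φ) (b c : ℝ) :
    ∫ s in (0 : ℝ)..b, (φ (s + c) - φ s) =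
      (∫ s in (0 : ℝ)..b + c, φ s) - (∫ s in (0 : ℝ)..b, φ s) - ∫ s in (0 : ℝ)..c, φ s := by
  rw [integral_sub ((by fun_prop : Continuous fun s => φ (s + c)).intervalIntegrable 0 b)
      (hφ.intervalIntegrable 0 b), integral_comp_add_right, zero_add,
    ← integral_interval_sub_left (hφ.intervalIntegrable 0 (b + c)) (hφ.intervalIntegrable 0 c)]
  abel

variable {F : ℝ × ℝ → E}

theorem primitive_slice_one_add_sub_sub (hF : Continuous F) (hsymm : ∀ x y, F (x, y) = F (y, x))
    (hcocycle : ∀ x y z, F (x, y) + F (x + y, z) = F (y, z) + F (x, y + z)) (x y : ℝ) :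
    (∫ s in (0 : ℝ)..x + y, F (1, s)) - (∫ s in (0 : ℝ)..x, F (1, s)) -
        ∫ s in (0 : ℝ)..y, F (1, s) =
      (∫ s in (0 : ℝ)..y + 1, F (x, s)) - (∫ s in (0 : ℝ)..y, F (x, s)) -
        ∫ s in (0 : ℝ)..1, F (x, s) := by
  have hshift : ∀ s, F (1, s + x) - F (1, s) = F (x, s + 1) - F (x, s) := fun s => by
    rw [add_comm s x, hsymm 1, hsymm 1]
    linear_combination (norm := module) hcocycle x s 1
  have h₁ := integral_comp_add_right_sub (φ := fun s => F (1, s)) (by fun_prop) y x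
  have h₂ := integral_comp_add_right_sub (φ := fun s => F (x, s)) (by fun_prop) y 1
  simp only [hshift] at h₁
  rw [← h₂, h₁, add_comm y x]
  abel

variable [CompleteSpace E]

theorem integral_slice_add_sub_sub (hF : Continuous F)
    (hcocycle : ∀ x y z, F (x, y) + F (x + y, z) = F (y, z) + F (x, y + z)) (x y : ℝ) :
    (∫ s in (0 : ℝ)..1, F (x + y, s)) - (∫ s in (0 : ℝ)..1, F (x, s)) -
        ∫ s in (0 : ℝ)..1, F (y, s) =
      (∫ s in (0 : ℝ)..y + 1, F (x, s)) - (∫ s in (0 : ℝ)..y, F (x, s)) -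
        (∫ s in (0 : ℝ)..1, F (x, s)) - F (x, y) := by
  have hshift : ∀ s, F (x + y, s) - F (x, s) - F (y, s) = (F (x, s + y) - F (x, s)) - F (x, y) :=
    fun s => by
      rw [add_comm s y]
      linear_combination (norm := module) hcocycle x y s
  have hint : ∀ a, IntervalIntegrable (fun s => F (a, s)) MeasureTheory.volume 0 1 :=
    fun a => (by fun_prop : Continuous fun s => F (a, s)).intervalIntegrable 0 1
  calc _ = ∫ s in (0 : ℝ)..1, (F (x + y, s) - F (x, s) - F (y, s)) := by
        rw [integral_sub ((hint _).sub (hint _)) (hint _), integral_sub (hint _) (hint _)]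
    _ = (∫ s in (0 : ℝ)..1, (F (x, s + y) - F (x, s))) - F (x, y) := by
        simp only [hshift]
        rw [integral_sub
          ((by fun_prop : Continuous fun s => F (x, s + y) - F (x, s)).intervalIntegrable 0 1)
          intervalIntegrable_const, integral_const]
        simp
    _ = _ := by
        rw [integral_comp_add_right_sub (φ := fun s => F (x, s)) (by fun_prop), add_comm 1 y]
        abel

theorem exists_continuous_eq_add_sub_sub_of_cocycle (hF : Continuous F)
    (hsymm : ∀ x y, F (x, y) = F (y, x))
    (hcocycle : ∀ x y z, F (x, y) + F (x + y, z) = F (y, z) + F (x, y + z)) :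
    ∃ f : ℝ → E, Continuous f ∧ ∀ x y, F (x, y) = f (x + y) - f x - f y := by
  refine ⟨fun t => (∫ s in (0 : ℝ)..t, F (1, s)) - ∫ s in (0 : ℝ)..1, F (t, s), ?_, fun x y => ?_⟩
  · exact (continuous_primitive
      (fun a b => (by fun_prop : Continuous fun s => F (1, s)).intervalIntegrable a b) 0).sub
      (continuous_parametric_intervalIntegral_of_continuous' (by fun_prop) 0 1)
  · linear_combination (norm := module)
      integral_slice_add_sub_sub hF hcocycle x y -
        primitive_slice_one_add_sub_sub hF hsymm hcocycle x y

end

theorem continuous_inhomCauchy_representation (F : ℝ × ℝ → ℝ) (g : ℝ → ℝ)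
    (hFcont : Continuous F)
    (hFg : ∀ x y : ℝ, F (x, y) = g (x + y) - g x - g y) :
    ∃ f : ℝ → ℝ, Continuous f ∧
      ∀ x y : ℝ, F (x, y) = f (x + y) - f x - f y := by
  refine exists_continuous_eq_add_sub_sub_of_cocycle hFcont (fun x y => ?_) (fun x y z => ?_) <;>
    simp only [hFg] <;> ring_nf
end

section
/- Suppose F : ℝ × ℝ → ℝ is continuous and F(x,y) = g(x+y) - g(x) - g(y) for some function g : ℝ → ℝ. Then there exists a continuous function f : ℝ → ℝ with F(x,y) = f(x+y) - f(x) - f(y) such that for every rational δ ∈ (0, 1/2) and every M ≥ 1, ω(f; δ; [-M,M]) ≤ 3·ω(F; δ; [-M,M]²). -/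
set_option maxHeartbeats 1000000

open Finset

private lemma chain_lemma (h : ℚ → ℝ) (e : ℚ → ℚ → ℝ)
    (hcoc : ∀ a b : ℚ, h (a + b) = h a + h b + e a b) (h0 : h 0 = 0) :
    ∀ (n : ℕ) (d : ℚ), h (n * d) = n * h d + ∑ j ∈ Finset.range n, e ((j : ℚ) * d) d := by
  intro n d
  induction n with
  | zero => simpa using h0
  | succ n ih =>
    have h1 : ((n : ℚ) + 1) * d = (n : ℚ) * d + d := by ring
    push_cast
    rw [h1, hcoc, ih, Finset.sum_range_succ]
    push_cast
    ring

private lemma descent_lemma (δ ω : ℝ) (h : ℚ → ℝ) (e : ℚ → ℚ → ℝ)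
    (hω : 0 ≤ ω) (hδ2 : δ < 1/2)
    (hcoc : ∀ a b : ℚ, h (a + b) = h a + h b + e a b)
    (he0 : ∀ b : ℚ, e 0 b = 0)
    (he : ∀ a b : ℚ, 0 ≤ a → (a : ℝ) ≤ 1 → 0 ≤ b → (b : ℝ) ≤ δ → |e a b| ≤ ω) :
    ∀ (p q : ℕ), 0 < q → ((p : ℝ) / q ≤ δ) →
      |h ((p : ℚ) / q) - ((p : ℝ) / q) * h 1| ≤ 2 * ω := by
  have h0 : h 0 = 0 := by
    have := hcoc 0 0
    rw [he0] at this
    simpa using this.symm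
  intro p
  induction p using Nat.strong_induction_on with
  | _ p ih =>
    intro q hq hpq
    rcases Nat.eq_zero_or_pos p with rfl | hp
    · simp [h0]
      positivity
    have hqR : (0:ℝ) < q := by exact_mod_cast hq
    set d : ℚ := (p : ℚ) / q with hd
    have hdr : ((d : ℝ)) = (p : ℝ) / q := by push_cast [hd]; ring
    have hd0 : 0 < d := by
      apply div_pos
      · exact_mod_cast hp
      · exact_mod_cast hq
    set N : ℕ := q / p with hN
    set r : ℕ := q % p with hr
    have hdm : p * N + r = q := Nat.div_add_mod q p
    have hrp : r < p := Nat.mod_lt q hp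
    have h2pq : 2 * p ≤ q := by
      have hpqR : (p : ℝ) / q < 1 / 2 := lt_of_le_of_lt hpq hδ2
      have : (2 * p : ℝ) < q := by
        rw [div_lt_iff₀ hqR] at hpqR
        linarith
      exact_mod_cast this.le
    have hN2 : 2 ≤ N := (Nat.le_div_iff_mul_le hp).2 (by omega)
    set d' : ℚ := (r : ℚ) / q with hd'
    have hd'0 : 0 ≤ d' := by positivity
    have hqQ : (0:ℚ) < q := by exact_mod_cast hq
    have hkey1 : (N : ℚ) * d + d' = 1 := by
      rw [hd, hd']
      field_simp
      push_cast [← hdm]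
      ring
    have hNd1 : (N : ℚ) * d ≤ 1 := by linarith [hd'0, hkey1]
    have hd'le : (d' : ℝ) ≤ δ := by
      have : (d' : ℝ) = (r : ℝ) / q := by push_cast [hd']; ring
      rw [this]
      refine le_trans ?_ hpq
      gcongr
    have hId : h 1 = (N : ℝ) * h d + (∑ j ∈ Finset.range N, e ((j:ℚ) * d) d)
        + h d' + e ((N:ℚ)*d) d' := by
      have hx := hcoc ((N:ℚ)*d) d'
      rw [hkey1] at hx
      rw [hx, chain_lemma h e hcoc h0 N d]
    set S : ℝ := ∑ j ∈ Finset.range N, e ((j:ℚ) * d) d with hS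
    have hdle : (d : ℝ) ≤ δ := by rw [hdr]; exact hpq
    have hdR0 : (0:ℝ) ≤ (d:ℝ) := by exact_mod_cast hd0.le
    have hNdR : (N : ℝ) * (d:ℝ) ≤ 1 := by exact_mod_cast hNd1
    have hSbound : |S| ≤ ((N:ℝ) - 1) * ω := by
      obtain ⟨m, hm⟩ : ∃ m, N = m + 1 := ⟨N - 1, by omega⟩
      have hmN : (m:ℝ) ≤ (N:ℝ) - 1 := by
        have : (N:ℝ) = (m:ℝ) + 1 := by exact_mod_cast hm
        linarith
      have hNm : ((N:ℝ) - 1) = (m:ℝ) := by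
        have : (N:ℝ) = (m:ℝ) + 1 := by exact_mod_cast hm
        linarith
      rw [hS, hNm]
      rw [show (∑ j ∈ Finset.range N, e ((j:ℚ) * d) d) =
          ∑ j ∈ Finset.range (m+1), e ((j:ℚ) * d) d from by rw [← hm]]
      rw [Finset.sum_range_succ']
      simp only [Nat.cast_zero, zero_mul, he0, add_zero]
      calc |∑ j ∈ Finset.range m, e (((j+1 : ℕ):ℚ) * d) d|
          ≤ ∑ j ∈ Finset.range m, |e (((j+1 : ℕ):ℚ) * d) d| :=
            Finset.abs_sum_le_sum_abs _ _
        _ ≤ ∑ _j ∈ Finset.range m, ω := by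
            apply Finset.sum_le_sum
            intro j hj
            have hjm := Finset.mem_range.mp hj
            apply he
            · positivity
            · have hj1 : (j+1 : ℕ) ≤ N := by omega
              have hj1R : ((j+1 : ℕ):ℝ) ≤ (N:ℝ) := by exact_mod_cast hj1
              push_cast
              push_cast at hj1R
              nlinarith
            · exact hd0.le
            · exact hdle
        _ = (m:ℝ) * ω := by rw [Finset.sum_const, Finset.card_range, nsmul_eq_mul]
    have he' : |e ((N:ℚ)*d) d'| ≤ ω := by
      apply he
      · positivity
      · exact_mod_cast hNd1
      · exact hd'0
      · exact hd'le
    have hrq : (r : ℝ)/q ≤ δ := by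
      refine le_trans ?_ hpq
      gcongr
    have hih := ih r hrp q hq hrq
    have hd'r : ((d':ℝ)) = (r:ℝ)/q := by rw [hd']; push_cast; ring
    have hA' : |h d' - (d':ℝ) * h 1| ≤ 2 * ω := by
      rw [hd'r, hd']
      exact hih
    have hcast : (d' : ℝ) = 1 - (N:ℝ) * (d:ℝ) := by
      have : ((N:ℚ)*d + d' : ℚ) = 1 := hkey1
      have h2 : ((N:ℝ)*(d:ℝ) + (d':ℝ) : ℝ) = 1 := by exact_mod_cast this
      linarith
    have key : (N:ℝ) * (h d - (d:ℝ) * h 1) =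
        -((h d' - (d':ℝ)*h 1) + S + e ((N:ℚ)*d) d') := by
      linear_combination -hId - h 1 * hcast
    have hNR : (2:ℝ) ≤ (N:ℝ) := by exact_mod_cast hN2
    have habs : (N:ℝ) * |h d - (d:ℝ)*h 1| ≤ 2*ω + ((N:ℝ)-1)*ω + ω := by
      calc (N:ℝ) * |h d - (d:ℝ)*h 1| = |(N:ℝ) * (h d - (d:ℝ)*h 1)| := by
            rw [abs_mul, abs_of_nonneg (by linarith : (0:ℝ) ≤ (N:ℝ))]
        _ = |(h d' - (d':ℝ)*h 1) + S + e ((N:ℚ)*d) d'| := by rw [key, abs_neg]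
        _ ≤ |h d' - (d':ℝ)*h 1| + |S| + |e ((N:ℚ)*d) d'| := abs_add_three _ _ _
        _ ≤ 2*ω + ((N:ℝ)-1)*ω + ω := by
            exact add_le_add (add_le_add hA' hSbound) he'
    rw [← hdr]
    nlinarith [abs_nonneg (h d - (d:ℝ)*h 1),
      mul_nonneg (by linarith : (0:ℝ) ≤ (N:ℝ) - 2) hω]

private lemma modCont2_set_bddAbove (F : ℝ × ℝ → ℝ) (hFcont : Continuous F) (δ M : ℝ) :
    BddAbove {d : ℝ | ∃ P ∈ (Set.Icc (-M) M ×ˢ Set.Icc (-M) M),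
      ∃ Q ∈ (Set.Icc (-M) M ×ˢ Set.Icc (-M) M), dist P Q ≤ δ ∧ d = |F P - F Q|} := by
  obtain ⟨C, hC⟩ := ((isCompact_Icc.prod isCompact_Icc) :
    IsCompact (Set.Icc (-M:ℝ) M ×ˢ Set.Icc (-M:ℝ) M)).exists_bound_of_continuousOn
    hFcont.continuousOn
  refine ⟨2*C, ?_⟩
  rintro d ⟨P, hP, Q, hQ, hPQ, rfl⟩
  have h1 := hC P hP
  have h2 := hC Q hQ
  rw [Real.norm_eq_abs] at h1 h2
  have := abs_sub (F P) (F Q)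
  have h3 := abs_nonneg (F P)
  linarith [abs_sub_abs_le_abs_sub (F P) (F Q), abs_abs (F P)]

private lemma abs_le_modCont2 (F : ℝ × ℝ → ℝ) (hFcont : Continuous F) {δ M : ℝ}
    (hδ0 : 0 ≤ δ) (hδM : δ ≤ M) {x y : ℝ} (hx : |x| ≤ M) (hy : |y| ≤ δ) :
    |F (x, y) - F (x, 0)| ≤ modCont2 F δ (Set.Icc (-M) M ×ˢ Set.Icc (-M) M) := by
  apply le_csSup (modCont2_set_bddAbove F hFcont δ M)
  refine ⟨(x, y), ?_, (x, 0), ?_, ?_, rfl⟩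
  · exact ⟨abs_le.mp hx, abs_le.mp (hy.trans hδM)⟩
  · refine ⟨abs_le.mp hx, ?_, ?_⟩ <;> simp <;> linarith
  · rw [Prod.dist_eq]
    simp only [dist_self, Real.dist_eq, sub_zero]
    rw [max_eq_right (abs_nonneg y)]
    exact hy

private lemma modCont2_nonneg (F : ℝ × ℝ → ℝ) (hFcont : Continuous F) {δ M : ℝ}
    (hδ0 : 0 ≤ δ) (hM : 0 ≤ M) :
    0 ≤ modCont2 F δ (Set.Icc (-M) M ×ˢ Set.Icc (-M) M) := by
  apply le_csSup (modCont2_set_bddAbove F hFcont δ M)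
  have hmem : ((0:ℝ), (0:ℝ)) ∈ Set.Icc (-M) M ×ˢ Set.Icc (-M) M := by
    refine ⟨⟨?_, ?_⟩, ?_, ?_⟩ <;> simp <;> linarith
  exact ⟨(0, 0), hmem, (0, 0), hmem, by simpa using hδ0, by simp⟩

private lemma rat_modulus (F : ℝ × ℝ → ℝ) (g : ℝ → ℝ) (hFcont : Continuous F)
    (hFg : ∀ x y : ℝ, F (x, y) = g (x + y) - g x - g y) {δ M : ℝ}
    (hδ0 : 0 < δ) (hδ2 : δ < 1/2) (hM : 1 ≤ M) :
    ∀ a b : ℚ, |(a:ℝ)| ≤ M → |(b:ℝ)| ≤ M → |(a:ℝ) - (b:ℝ)| ≤ δ →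
      |(g a - (a:ℝ) * (g 1 - g 0)) - (g b - (b:ℝ) * (g 1 - g 0))| ≤
        3 * modCont2 F δ (Set.Icc (-M) M ×ˢ Set.Icc (-M) M) := by
  set ω := modCont2 F δ (Set.Icc (-M) M ×ˢ Set.Icc (-M) M) with hωdef
  have hδM : δ ≤ M := by linarith
  have hω : 0 ≤ ω := modCont2_nonneg F hFcont hδ0.le (by linarith)
  set h : ℚ → ℝ := fun q => g q - g 0 with hh
  set e : ℚ → ℚ → ℝ := fun a b => F ((a:ℝ), (b:ℝ)) - F ((a:ℝ), 0) with hedef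
  have hcoc : ∀ a b : ℚ, h (a + b) = h a + h b + e a b := by
    intro a b
    simp only [hh, hedef]
    rw [hFg ((a:ℝ)) ((b:ℝ)), hFg ((a:ℝ)) 0]
    push_cast
    simp only [add_zero]
    ring
  have he0 : ∀ b : ℚ, e 0 b = 0 := by
    intro b
    simp only [hedef]
    rw [hFg, hFg]
    push_cast
    simp only [zero_add, add_zero]
    ring
  have heB : ∀ a b : ℚ, 0 ≤ a → (a:ℝ) ≤ 1 → 0 ≤ b → (b:ℝ) ≤ δ → |e a b| ≤ ω := by
    intro a b ha0 ha1 hb0 hbδ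
    simp only [hedef]
    apply abs_le_modCont2 F hFcont hδ0.le hδM
    · rw [abs_le]
      have : (0:ℝ) ≤ (a:ℝ) := by exact_mod_cast ha0
      constructor <;> linarith
    · rw [abs_le]
      have : (0:ℝ) ≤ (b:ℝ) := by exact_mod_cast hb0
      constructor <;> linarith
  have key : ∀ a b : ℚ, b ≤ a → |(a:ℝ)| ≤ M → |(b:ℝ)| ≤ M → |(a:ℝ) - (b:ℝ)| ≤ δ →
      |(g a - (a:ℝ) * (g 1 - g 0)) - (g b - (b:ℝ) * (g 1 - g 0))| ≤ 3 * ω := by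
    intro a b hba haM hbM habδ
    set d : ℚ := a - b with hddef
    have hd0 : 0 ≤ d := by simp [hddef]; exact hba
    have hdR : ((d:ℝ)) = (a:ℝ) - (b:ℝ) := by push_cast [hddef]; ring
    have hdδ : (d:ℝ) ≤ δ := by
      rw [hdR]
      calc (a:ℝ) - b ≤ |(a:ℝ) - b| := le_abs_self _
        _ ≤ δ := habδ
    -- descent bound for d
    have hnum0 : 0 ≤ d.num := Rat.num_nonneg.mpr hd0
    set p : ℕ := d.num.toNat with hpdef
    set q : ℕ := d.den with hqdef
    have hqpos : 0 < q := d.pos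
    have hint : ((p:ℤ)) = d.num := Int.toNat_of_nonneg hnum0
    have hdpq : ((p:ℚ)) / ((q:ℚ)) = d := by
      have h1 : ((p:ℚ)) = ((d.num : ℤ) : ℚ) := by exact_mod_cast hint
      rw [h1, hqdef]
      exact Rat.num_div_den d
    have hdpqR : ((p:ℝ)) / ((q:ℝ)) = ((d:ℝ)) := by
      rw [← hdpq]
      push_cast
      ring
    have hdesc : |h d - (d:ℝ) * h 1| ≤ 2 * ω := by
      have := descent_lemma δ ω h e hω hδ2 hcoc he0 heB p q hqpos
        (by rw [hdpqR]; exact hdδ)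
      rwa [hdpq, hdpqR] at this
    -- e b d bound
    have hebd : |e b d| ≤ ω := by
      simp only [hedef]
      apply abs_le_modCont2 F hFcont hδ0.le hδM hbM
      rw [abs_of_nonneg (by exact_mod_cast hd0 : (0:ℝ) ≤ (d:ℝ))]
      exact hdδ
    -- decomposition
    have hstep : (g a - (a:ℝ) * (g 1 - g 0)) - (g b - (b:ℝ) * (g 1 - g 0)) =
        (h d - (d:ℝ) * h 1) + e b d := by
      simp only [hh, hedef]
      rw [hFg ((b:ℝ)) ((d:ℝ)), hFg ((b:ℝ)) 0]
      rw [hdR, show (b:ℝ) + ((a:ℝ) - (b:ℝ)) = (a:ℝ) by ring]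
      push_cast
      simp only [add_zero]
      ring
    rw [hstep]
    calc |(h d - (d:ℝ) * h 1) + e b d| ≤ |h d - (d:ℝ) * h 1| + |e b d| := abs_add_le _ _
      _ ≤ 2 * ω + ω := add_le_add hdesc hebd
      _ = 3 * ω := by ring
  intro a b haM hbM habδ
  rcases le_total b a with hba | hab
  · exact key a b hba haM hbM habδ
  · rw [abs_sub_comm]
    rw [abs_sub_comm] at habδ
    exact key b a hab hbM haM habδ

private lemma small_modCont2 (F : ℝ × ℝ → ℝ) (hFcont : Continuous F) (M : ℝ)
    (ε : ℝ) (hε : 0 < ε) :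
    ∃ δq : ℚ, 0 < ((δq:ℝ)) ∧ ((δq:ℝ)) < 1/2 ∧
      modCont2 F ((δq:ℝ)) (Set.Icc (-M) M ×ˢ Set.Icc (-M) M) ≤ ε := by
  have hK : IsCompact (Set.Icc (-M:ℝ) M ×ˢ Set.Icc (-M:ℝ) M) :=
    isCompact_Icc.prod isCompact_Icc
  have hUC := hK.uniformContinuousOn_of_continuous hFcont.continuousOn
  rw [Metric.uniformContinuousOn_iff] at hUC
  obtain ⟨δ₀, hδ₀, hUC'⟩ := hUC ε hε
  obtain ⟨δq, h1, h2⟩ := exists_rat_btwn (show (0:ℝ) < min δ₀ (1/2) by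
    apply lt_min hδ₀; norm_num)
  refine ⟨δq, h1, lt_of_lt_of_le h2 (min_le_right _ _), ?_⟩
  apply Real.sSup_le
  · rintro x ⟨P, hP, Q, hQ, hPQ, rfl⟩
    have := hUC' P hP Q hQ (lt_of_le_of_lt hPQ (lt_of_lt_of_le h2 (min_le_left _ _)))
    rw [Real.dist_eq] at this
    exact this.le
  · exact hε.le

theorem continuous_representation_with_modulus_bound (F : ℝ × ℝ → ℝ) (g : ℝ → ℝ)
    (hFcont : Continuous F)
    (hFg : ∀ x y : ℝ, F (x, y) = g (x + y) - g x - g y) :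
    ∃ f : ℝ → ℝ, Continuous f ∧
      (∀ x y : ℝ, F (x, y) = f (x + y) - f x - f y) ∧
      ∀ δ : ℝ, 0 < δ → δ < 1 / 2 → (∃ q : ℚ, (q : ℝ) = δ) → ∀ M : ℝ, 1 ≤ M →
        modCont1 f δ (Set.Icc (-M) M) ≤
          3 * modCont2 F δ (Set.Icc (-M) M ×ˢ Set.Icc (-M) M) := by
  classical
  have di : IsDenseInducing ((↑) : ℚ → ℝ) :=
    Rat.isDenseEmbedding_coe_real.toIsDenseInducing
  set f₀ : ℚ → ℝ := fun q => g q - (q:ℝ) * (g 1 - g 0) with hf₀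
  -- local uniform continuity estimate
  have hest : ∀ x : ℝ, ∀ ε : ℝ, 0 < ε → ∃ θ : ℝ, 0 < θ ∧ ∀ a b : ℚ,
      |(a:ℝ) - x| < θ → |(b:ℝ) - x| < θ → |f₀ a - f₀ b| ≤ ε := by
    intro x ε hε
    set M := |x| + 1 with hMdef
    have hM : 1 ≤ M := by rw [hMdef]; linarith [abs_nonneg x]
    obtain ⟨δq, hq0, hq2, hqω⟩ := small_modCont2 F hFcont M (ε/3) (by positivity)
    refine ⟨min ((δq:ℝ)/2) (1/2), by positivity, ?_⟩
    intro a b ha hb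
    have haM : |(a:ℝ)| ≤ M := by
      have h1 : |(a:ℝ) - x| < 1/2 := lt_of_lt_of_le ha (min_le_right _ _)
      have := abs_sub_abs_le_abs_sub ((a:ℝ)) x
      rw [hMdef]; linarith [abs_nonneg ((a:ℝ) - x)]
    have hbM : |(b:ℝ)| ≤ M := by
      have h1 : |(b:ℝ) - x| < 1/2 := lt_of_lt_of_le hb (min_le_right _ _)
      have := abs_sub_abs_le_abs_sub ((b:ℝ)) x
      rw [hMdef]; linarith
    have habδ : |(a:ℝ) - (b:ℝ)| ≤ (δq:ℝ) := by
      have h1 : |(a:ℝ) - x| < (δq:ℝ)/2 := lt_of_lt_of_le ha (min_le_left _ _)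
      have h2 : |(b:ℝ) - x| < (δq:ℝ)/2 := lt_of_lt_of_le hb (min_le_left _ _)
      calc |(a:ℝ) - (b:ℝ)| ≤ |(a:ℝ) - x| + |x - (b:ℝ)| := abs_sub_le _ _ _
        _ ≤ (δq:ℝ)/2 + (δq:ℝ)/2 := by rw [abs_sub_comm x]; linarith
        _ = (δq:ℝ) := by ring
    have h3 := rat_modulus F g hFcont hFg hq0 hq2 hM a b haM hbM habδ
    calc |f₀ a - f₀ b| ≤ 3 * modCont2 F ((δq:ℝ)) (Set.Icc (-M) M ×ˢ Set.Icc (-M) M) := h3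
      _ ≤ 3 * (ε/3) := by linarith
      _ = ε := by ring
  -- limits exist along the comap filter
  have hlim : ∀ x : ℝ, ∃ c, Filter.Tendsto f₀
      (Filter.comap ((↑) : ℚ → ℝ) (nhds x)) (nhds c) := by
    intro x
    have hne : (Filter.comap ((↑) : ℚ → ℝ) (nhds x)).NeBot := di.comap_nhds_neBot x
    have hc : Cauchy (Filter.map f₀ (Filter.comap ((↑) : ℚ → ℝ) (nhds x))) := by
      rw [Metric.cauchy_iff]
      refine ⟨hne.map _, ?_⟩
      intro ε hε
      obtain ⟨θ, hθ, hθ'⟩ := hest x (ε/2) (by positivity)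
      refine ⟨f₀ '' {q : ℚ | |(q:ℝ) - x| < θ}, ?_, ?_⟩
      · rw [Filter.mem_map]
        refine Filter.mem_of_superset ?_ (Set.subset_preimage_image _ _)
        have : {q : ℚ | |(q:ℝ) - x| < θ} = ((↑) : ℚ → ℝ) ⁻¹' (Metric.ball x θ) := by
          ext q
          simp [Metric.mem_ball, Real.dist_eq]
        rw [this]
        exact Filter.preimage_mem_comap (Metric.ball_mem_nhds x hθ)
      · rintro u ⟨a, ha, rfl⟩ v ⟨b, hb, rfl⟩
        rw [Real.dist_eq]
        exact lt_of_le_of_lt (hθ' a b ha hb) (by linarith)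
    obtain ⟨c, hc'⟩ := CompleteSpace.complete hc
    exact ⟨c, hc'⟩
  set f : ℝ → ℝ := di.extend f₀ with hfdef
  have hfc : Continuous f := di.continuous_extend hlim
  have hfq : ∀ q : ℚ, f (q:ℝ) = f₀ q := fun q => di.extend_eq' hlim q
  have hrep : ∀ x y : ℝ, F (x, y) = f (x + y) - f x - f y := by
    have hdense : Dense ((Set.range ((↑) : ℚ → ℝ)) ×ˢ (Set.range ((↑) : ℚ → ℝ))) :=
      Dense.prod (Rat.isDenseEmbedding_coe_real.dense) (Rat.isDenseEmbedding_coe_real.dense)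
    have heq : (fun p : ℝ × ℝ => F p) = fun p : ℝ × ℝ => f (p.1 + p.2) - f p.1 - f p.2 := by
      apply Continuous.ext_on hdense hFcont
      · exact ((hfc.comp (continuous_fst.add continuous_snd)).sub
          (hfc.comp continuous_fst)).sub (hfc.comp continuous_snd)
      · rintro ⟨x, y⟩ ⟨⟨a, rfl⟩, ⟨b, rfl⟩⟩
        show F ((a:ℝ), (b:ℝ)) = f ((a:ℝ) + (b:ℝ)) - f (a:ℝ) - f (b:ℝ)
        rw [show ((a:ℝ) + (b:ℝ)) = (((a + b : ℚ)):ℝ) by push_cast; ring]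
        rw [hfq, hfq, hfq, hFg]
        simp only [hf₀]
        push_cast
        ring
    intro x y
    exact congrFun heq (x, y)
  refine ⟨f, hfc, hrep, ?_⟩
  intro δ hδ0 hδ2 _ M hM
  have hω : 0 ≤ modCont2 F δ (Set.Icc (-M) M ×ˢ Set.Icc (-M) M) :=
    modCont2_nonneg F hFcont hδ0.le (by linarith)
  unfold modCont1
  apply Real.sSup_le
  · rintro x ⟨u, hu, v, hv, huv, rfl⟩
    rcases eq_or_ne u v with rfl | huvne
    · simp only [sub_self, abs_zero]
      linarith
    -- approximation argument
    refine le_of_forall_pos_le_add ?_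
    intro η hη
    obtain ⟨θu, hθu, hθu'⟩ := Metric.continuousAt_iff.mp
      (hfc.continuousAt : ContinuousAt f u) (η/2) (by positivity)
    obtain ⟨θv, hθv, hθv'⟩ := Metric.continuousAt_iff.mp
      (hfc.continuousAt : ContinuousAt f v) (η/2) (by positivity)
    set θ := min θu θv with hθdef
    have hθpos : 0 < θ := lt_min hθu hθv
    set t : ℝ := min (1/2) (θ / (2*δ)) with htdef
    have ht0 : 0 < t := lt_min (by norm_num) (by positivity)
    have ht12 : t ≤ 1/2 := min_le_left _ _
    have htθ : t * δ ≤ θ/2 := by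
      have h1 : t ≤ θ / (2*δ) := min_le_right _ _
      calc t * δ ≤ (θ / (2*δ)) * δ := by nlinarith
        _ = θ/2 := by field_simp
    set u' := u - t*(u-v)/2 with hu'def
    set v' := v + t*(u-v)/2 with hv'def
    set γ := t*δ/4 with hγdef
    have hγ0 : 0 < γ := by positivity
    have huM : -M ≤ u ∧ u ≤ M := hu
    have hvM : -M ≤ v ∧ v ≤ M := hv
    have hu'M : -M ≤ u' ∧ u' ≤ M := by
      constructor <;> (rw [hu'def]; nlinarith [huM.1, huM.2, hvM.1, hvM.2])
    have hv'M : -M ≤ v' ∧ v' ≤ M := by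
      constructor <;> (rw [hv'def]; nlinarith [huM.1, huM.2, hvM.1, hvM.2])
    obtain ⟨a, ha1, ha2⟩ := exists_rat_btwn (show max (-M) (u' - γ) < min M (u' + γ) by
      rw [max_lt_iff, lt_min_iff, lt_min_iff]
      refine ⟨⟨by linarith [hu'M.1, hu'M.2], by linarith [hu'M.1]⟩,
        by linarith [hu'M.2], by linarith⟩)
    obtain ⟨b, hb1, hb2⟩ := exists_rat_btwn (show max (-M) (v' - γ) < min M (v' + γ) by
      rw [max_lt_iff, lt_min_iff, lt_min_iff]
      refine ⟨⟨by linarith [hv'M.1, hv'M.2], by linarith [hv'M.1]⟩,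
        by linarith [hv'M.2], by linarith⟩)
    rw [max_lt_iff] at ha1 hb1
    rw [lt_min_iff] at ha2 hb2
    have haM : |(a:ℝ)| ≤ M := abs_le.mpr ⟨ha1.1.le, ha2.1.le⟩
    have hbM : |(b:ℝ)| ≤ M := abs_le.mpr ⟨hb1.1.le, hb2.1.le⟩
    have hau' : |(a:ℝ) - u'| < γ := abs_sub_lt_iff.mpr ⟨by linarith [ha2.2], by linarith [ha1.2]⟩
    have hbv' : |(b:ℝ) - v'| < γ := abs_sub_lt_iff.mpr ⟨by linarith [hb2.2], by linarith [hb1.2]⟩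
    have hu'v' : |u' - v'| ≤ (1 - t) * δ := by
      rw [show u' - v' = (1-t)*(u-v) by rw [hu'def, hv'def]; ring]
      rw [abs_mul, abs_of_nonneg (by linarith : (0:ℝ) ≤ 1 - t)]
      nlinarith [huv, abs_nonneg (u - v)]
    have habδ : |(a:ℝ) - (b:ℝ)| ≤ δ := by
      calc |(a:ℝ) - (b:ℝ)| ≤ |(a:ℝ) - u'| + |u' - (b:ℝ)| := abs_sub_le _ _ _
        _ ≤ |(a:ℝ) - u'| + (|u' - v'| + |v' - (b:ℝ)|) := by
            linarith [abs_sub_le u' v' ((b:ℝ))]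
        _ ≤ γ + ((1-t)*δ + γ) := by
            rw [abs_sub_comm v' ((b:ℝ))]
            linarith
        _ ≤ δ := by rw [hγdef]; nlinarith
    have hfab := rat_modulus F g hFcont hFg hδ0 hδ2 hM a b haM hbM habδ
    have hau : |(a:ℝ) - u| < θu := by
      have h1 : |u' - u| ≤ t*δ/2 := by
        rw [show u' - u = -(t*(u-v)/2) by rw [hu'def]; ring, abs_neg]
        rw [abs_div, abs_mul, abs_of_nonneg ht0.le]
        simp only [abs_two]
        nlinarith [huv, abs_nonneg (u-v), abs_nonneg t]
      calc |(a:ℝ) - u| ≤ |(a:ℝ) - u'| + |u' - u| := abs_sub_le _ _ _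
        _ < γ + t*δ/2 := by linarith
        _ ≤ θ := by rw [hγdef]; linarith [htθ, hθpos.le]
        _ ≤ θu := min_le_left _ _
    have hbv : |(b:ℝ) - v| < θv := by
      have h1 : |v' - v| ≤ t*δ/2 := by
        rw [show v' - v = t*(u-v)/2 by rw [hv'def]; ring]
        rw [abs_div, abs_mul, abs_of_nonneg ht0.le]
        simp only [abs_two]
        nlinarith [huv, abs_nonneg (u-v), abs_nonneg t]
      calc |(b:ℝ) - v| ≤ |(b:ℝ) - v'| + |v' - v| := abs_sub_le _ _ _
        _ < γ + t*δ/2 := by linarith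
        _ ≤ θ := by rw [hγdef]; linarith [htθ, hθpos.le]
        _ ≤ θv := min_le_right _ _
    have hfa : |f u - f₀ a| < η/2 := by
      have h1 := hθu' (show dist ((a:ℝ)) u < θu by rw [Real.dist_eq]; exact hau)
      rw [hfq, Real.dist_eq] at h1
      rw [abs_sub_comm]
      exact h1
    have hfb : |f₀ b - f v| < η/2 := by
      have h1 := hθv' (show dist ((b:ℝ)) v < θv by rw [Real.dist_eq]; exact hbv)
      rw [hfq, Real.dist_eq] at h1
      exact h1
    calc |f u - f v| ≤ |f u - f₀ a| + |f₀ a - f v| := abs_sub_le _ _ _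
      _ ≤ |f u - f₀ a| + (|f₀ a - f₀ b| + |f₀ b - f v|) := by
          linarith [abs_sub_le (f₀ a) (f₀ b) (f v)]
      _ ≤ η/2 + (3 * modCont2 F δ (Set.Icc (-M) M ×ˢ Set.Icc (-M) M) + η/2) := by
          linarith
      _ = 3 * modCont2 F δ (Set.Icc (-M) M ×ˢ Set.Icc (-M) M) + η := by ring
  · linarith
end
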